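/- arXiv:2003.06328 — 3 statements merged into one kernel-verified Lean document; each statement's English description precedes it below -/
import Mathlib

section
/- Let A and B be non-empty finite words over a finite alphabet such that AB ≠ BA (equivalently, A and B are not both powers of a common word). Then there exists a word u of length strictly less than |A| + |B| such that: for every word x that is a concatenation of words from {A,B} whose first block is A, and every word y that is a concatenation of words from {A,B} whose first block is B, (i) if |x| ≥ |u| then u is a prefix of x, and if |y| ≥ |u| then u is a prefix of y; and (ii) if |x| > |u| and |y| > |u| then the letters of x and y at position |u| (0-indexed) are different. -/
/-!
Let `k` be the length of the longest common prefix of `AB` and `BA`; as the two words differ and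
have the same length, `k < |A| + |B|`. Every word of `A{A,B}*` agrees with `AB` on its first
`k + 1` letters: for `ABx'` this is clear, and for `Ax'` with `x' ∈ A{A,B}*` the letters at
positions `|A| ≤ i ≤ k` are those of `x'` at `i - |A| < k`, which by induction are those of `AB`,
hence of `BA`, hence of `B`. Symmetrically every word of `B{A,B}*` agrees with `BA` on its first
`k + 1` letters, so the common prefix `u` of length `k` separates the two families at position `k`.
-/

open Filter Topology
open scoped ENNReal

section Defs

variable {A B C : Type*}

/-- The shift of a two-sided sequence by `k`. -/
def shiftBy (k : ℤ) (x : ℤ → A) : ℤ → A := fun n => x (n + k)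

/-- The finite word `x_m x_{m+1} ⋯ x_{m+len-1}` read in the two-sided sequence `x`. -/
def factorAt (x : ℤ → A) (m : ℤ) (len : ℕ) : List A :=
  (List.range len).map fun i => x (m + (i : ℤ))

/-- Extension of a morphism (given on letters) to finite words. -/
def wordImage (τ : A → List B) (w : List A) : List B := (w.map τ).flatten

/-- Composition of two morphisms. -/
def morphComp (σ : B → List C) (τ : A → List B) : A → List C :=
  fun a => wordImage σ (τ a)

/-- A morphism is non-erasing if no letter is sent to the empty word. -/
def NonErasing (τ : A → List B) : Prop := ∀ a, τ a ≠ []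

/-- A morphism is positive if every target letter occurs in the image of each letter. -/
def PositiveMorph (τ : A → List B) : Prop := ∀ a : A, ∀ b : B, b ∈ τ a

/-- A morphism is proper if all images start with the same letter and end with the same letter. -/
def ProperMorph (τ : A → List B) : Prop :=
  ∃ b b' : B, ∀ a : A, (τ a).head? = some b ∧ (τ a).getLast? = some b'

/-- Cumulative lengths of the images `τ(y_0 ⋯ y_{n-1})` (or the negative part for `n < 0`). -/
def cumLen (τ : A → List B) (y : ℤ → A) (n : ℤ) : ℤ :=
  if 0 ≤ n then ∑ i ∈ Finset.range n.toNat, ((τ (y (i : ℤ))).length : ℤ)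
  else -∑ i ∈ Finset.range (-n).toNat, ((τ (y (-(i : ℤ) - 1))).length : ℤ)

/-- `z` is the two-sided concatenation of the images of the letters of `y` under `τ`,
the image of the 0-th coordinate starting at coordinate 0. -/
def IsSeqImage (τ : A → List B) (y : ℤ → A) (z : ℤ → B) : Prop :=
  ∀ (n : ℤ) (j : Fin (τ (y n)).length), z (cumLen τ y n + ((j : ℕ) : ℤ)) = (τ (y n)).get j

/-- `(k, y)` is a centered `τ`-representation of `x` in `Y`. -/
def IsCenteredRep (τ : A → List B) (Y : Set (ℤ → A)) (x : ℤ → B) (k : ℕ) (y : ℤ → A) : Prop :=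
  y ∈ Y ∧ k < (τ (y 0)).length ∧ ∃ z, IsSeqImage τ y z ∧ x = shiftBy (k : ℤ) z

/-- `τ` is recognizable in `Y`: every point has at most one centered `τ`-representation in `Y`. -/
def RecognizableIn (τ : A → List B) (Y : Set (ℤ → A)) : Prop :=
  ∀ (x : ℤ → B) (k k' : ℕ) (y y' : ℤ → A),
    IsCenteredRep τ Y x k y → IsCenteredRep τ Y x k' y' → k = k' ∧ y = y'

/-- A two-sided sequence is aperiodic for the shift. -/
def AperiodicPoint (x : ℤ → A) : Prop := ∀ k : ℤ, k ≠ 0 → shiftBy k x ≠ x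

/-- `τ` is recognizable in `Y` for aperiodic points. -/
def RecognizableInForAperiodic (τ : A → List B) (Y : Set (ℤ → A)) : Prop :=
  ∀ (x : ℤ → B) (k k' : ℕ) (y y' : ℤ → A), AperiodicPoint x →
    IsCenteredRep τ Y x k y → IsCenteredRep τ Y x k' y' → k = k' ∧ y = y'

/-- A subshift: a closed shift-invariant subset of `A^ℤ`. -/
def IsSubshift [TopologicalSpace A] (X : Set (ℤ → A)) : Prop :=
  IsClosed X ∧ ∀ k : ℤ, ∀ x ∈ X, shiftBy k x ∈ X

/-- A minimal subshift: nonempty and every orbit is dense in it. -/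
def MinimalSubshift [TopologicalSpace A] (X : Set (ℤ → A)) : Prop :=
  IsSubshift X ∧ X.Nonempty ∧ ∀ x ∈ X, X ⊆ closure {z | ∃ k : ℤ, z = shiftBy k x}

/-- `X` is the smallest subshift containing `τ(Y)`. -/
def IsSmallestSubshiftContaining [TopologicalSpace B] (τ : A → List B)
    (Y : Set (ℤ → A)) (X : Set (ℤ → B)) : Prop :=
  IsSubshift X ∧ (∀ y ∈ Y, ∀ z, IsSeqImage τ y z → z ∈ X) ∧
    ∀ X' : Set (ℤ → B), IsSubshift X' → (∀ y ∈ Y, ∀ z, IsSeqImage τ y z → z ∈ X') → X ⊆ X'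

/-- The language of a subshift. -/
def langOf (X : Set (ℤ → A)) : Set (List A) :=
  {w | ∃ x ∈ X, ∃ m : ℤ, factorAt x m w.length = w}

/-- The complexity function of a subshift. -/
noncomputable def complexity (X : Set (ℤ → A)) (n : ℕ) : ℕ :=
  Set.ncard {w : List A | w.length = n ∧ w ∈ langOf X}

/-- `‖τ‖`, the maximal length of the image of a letter. -/
noncomputable def normSup (τ : A → List B) : ℕ := sSup (Set.range fun a => (τ a).length)

/-- `⟨τ⟩`, the minimal length of the image of a letter. -/
noncomputable def normInf (τ : A → List B) : ℕ := sInf (Set.range fun a => (τ a).length)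

/-- The language of `θ(A^ℤ)`: finite words occurring in two-sided images under `θ`. -/
def morphLang (θ : A → List C) : Set (List C) :=
  {w | ∃ (x : ℤ → A) (z : ℤ → C) (m : ℤ), IsSeqImage θ x z ∧ factorAt z m w.length = w}

/-- `p_{θ(A^ℤ)}(n)`: number of words of length `n` occurring in two-sided images under `θ`. -/
noncomputable def morphComplexity (θ : A → List C) (n : ℕ) : ℕ :=
  Set.ncard {w : List C | w.length = n ∧ w ∈ morphLang θ}

/-- The set `F(b, n, σ, L)` of right extensions of `b` in `L`. -/
def Fset (σ : B → List C) (b : B) (n : ℕ) (L : Set (List B)) : Set (List B) :=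
  {w | w ∈ L ∧ (b :: w) ∈ L ∧ w.head? ≠ some b ∧
    (wordImage σ w.dropLast).length < n ∧ n ≤ (wordImage σ w).length}

/-- `τ(A^i)`: images under `τ` of words of length `i`. -/
def imagesOfLen (τ : A → List B) (i : ℕ) : Set (List B) :=
  {w | ∃ u : List A, u.length = i ∧ wordImage τ u = w}

/-- `Comp_i(σ|τ)(n)`, the `i`-th complexity of `σ` with respect to `τ`. -/
noncomputable def relCompI [Fintype B] (σ : B → List C) (τ : A → List B) (i n : ℕ) : ℕ :=
  ∑ b : B, (Fset σ b n (imagesOfLen τ i)).ncard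

/-- `Comp(σ|τ)(n)`, the complexity of `σ` with respect to `τ`. -/
noncomputable def relComp [Fintype B] (σ : B → List C) (τ : A → List B) (n : ℕ) : ℕ :=
  ∑ b : B, (Fset σ b n (morphLang τ)).ncard

/-- Number of maximal blocks of a single repeated letter in a word. -/
def blockCount [DecidableEq B] : List B → ℕ
  | [] => 0
  | [_] => 1
  | a :: b :: l => (if a = b then 0 else 1) + blockCount (b :: l)

/-- The repetition complexity `r-comp(τ)` of a morphism. -/
noncomputable def rcomp [Fintype A] [DecidableEq B] (τ : A → List B) : ℕ :=
  ∑ a : A, blockCount (τ a)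

/-- Two two-sided sequences are left asymptotic. -/
def LeftAsymptotic (x y : ℤ → A) : Prop :=
  ∃ N : ℕ, ∀ k : ℕ, N ≤ k → x (-(k : ℤ)) = y (-(k : ℤ))

/-- The shift orbits of `x` and `y` are asymptotic. -/
def OrbitsAsymptotic (x y : ℤ → A) : Prop :=
  ∃ k k' : ℤ, LeftAsymptotic (shiftBy k x) (shiftBy k' y)

/-- A finite set `W` of non-empty words is recognizable in the subshift `X`. -/
def WordSetRecognizable [TopologicalSpace B] (W : Set (List B)) (X : Set (ℤ → B)) : Prop :=
  ∃ (A' : Type) (_ : Fintype A') (Y : Set (ℤ → A')) (τ : A' → List B),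
    Set.range τ = W ∧ NonErasing τ ∧ (@IsSubshift A' ⊥ Y) ∧
    IsSmallestSubshiftContaining τ Y X ∧ RecognizableIn τ Y

end Defs

section Seq

variable {A : ℕ → Type*}

/-- `τ_{[0,n]} = τ_0 ∘ τ_1 ∘ ⋯ ∘ τ_n`. -/
def compSeq (τ : ∀ n, A (n+1) → List (A n)) : ∀ n, A (n+1) → List (A 0)
  | 0 => τ 0
  | n+1 => fun a => wordImage (compSeq τ n) (τ (n+1) a)

/-- `τ_{[n, n+k]} = τ_n ∘ ⋯ ∘ τ_{n+k}`. -/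
def compFrom (τ : ∀ n, A (n+1) → List (A n)) (n : ℕ) : ∀ k, A (n+k+1) → List (A n)
  | 0 => τ n
  | k+1 => fun a => wordImage (compFrom τ n k) (τ (n+k+1) a)

/-- The S-adic subshift generated by the directive sequence `τ`. -/
def sadicSubshift (τ : ∀ n, A (n+1) → List (A n)) : Set (ℤ → A 0) :=
  {x | ∀ (m : ℤ) (len : ℕ), ∃ (n : ℕ) (a : A (n+1)), factorAt x m len <:+: compSeq τ n a}

/-- The level-`n` subshift `X_τ^{(n)}` of the directive sequence `τ`. -/
def levelSubshift (τ : ∀ n, A (n+1) → List (A n)) (n : ℕ) : Set (ℤ → A n) :=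
  {x | ∀ (m : ℤ) (len : ℕ), ∃ (k : ℕ) (a : A (n+k+1)), factorAt x m len <:+: compFrom τ n k a}

end Seq

namespace List

variable {α : Type*}

theorem exists_take_eq_take_and_getElem?_ne {l₁ l₂ : List α} (h : l₁ ≠ l₂) :
    ∃ k, l₁.take k = l₂.take k ∧ l₁[k]? ≠ l₂[k]? := by
  induction l₁ generalizing l₂ with
  | nil =>
    cases l₂ with
    | nil => exact absurd rfl h
    | cons b l₂ => exact ⟨0, rfl, by simp⟩
  | cons a l₁ ih =>
    cases l₂ with
    | nil => exact ⟨0, rfl, by simp⟩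
    | cons b l₂ =>
      by_cases hab : a = b
      · subst hab
        obtain ⟨k, htake, hne⟩ := ih fun h' => h (h' ▸ rfl)
        exact ⟨k + 1, by simp [htake], by simpa using hne⟩
      · exact ⟨0, rfl, by simpa using hab⟩

theorem take_prefix_of_take_succ_prefix {x w : List α} {k : ℕ} (h : x.take (k + 1) <+: w)
    (hk : k ≤ x.length) : w.take k <+: x := by
  have hpre : x.take k <+: w.take k := by simpa [take_take] using h.take k
  have hw := h.length_le
  simp only [length_take] at hw
  rw [← hpre.eq_of_length (by simp; omega)]
  exact take_prefix k x

theorem getElem?_eq_of_take_succ_prefix {x w : List α} {k : ℕ} (h : x.take (k + 1) <+: w)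
    (hk : k < x.length) : x[k]? = w[k]? := by
  obtain ⟨t, rfl⟩ := h
  rw [getElem?_append_left (by simp; omega), getElem?_take_of_lt (Nat.lt_succ_self k)]

theorem take_succ_append_flatten_prefix {A B : List α} (hA : A ≠ []) {k : ℕ}
    (hk : k < A.length + B.length) (hAB : (A ++ B).take k = (B ++ A).take k)
    {l : List (List α)} (hl : ∀ w ∈ l, w = A ∨ w = B) :
    (A ++ l.flatten).take (k + 1) <+: A ++ B := by
  induction l with
  | nil => simpa using (take_prefix _ A).trans (prefix_append A B)
  | cons w l ih =>
    rw [flatten_cons]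
    rcases hl w mem_cons_self with hw | hw <;> subst w
    · have ih := ih fun v hv => hl v (mem_cons_of_mem _ hv)
      by_cases hkA : k + 1 ≤ A.length
      · rw [take_append_of_le_length hkA]
        exact (take_prefix _ _).trans (prefix_append _ _)
      have hm : k + 1 - A.length ≤ k := by have := length_pos_iff.mpr hA; omega
      rw [take_append, take_of_length_le (by omega), prefix_append_right_inj]
      calc take (k + 1 - A.length) (A ++ l.flatten)
          = take (k + 1 - A.length) (take (k + 1) (A ++ l.flatten)) := by
            rw [take_take, min_eq_left (by omega)]
        _ <+: take (k + 1 - A.length) (A ++ B) := ih.take _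
        _ = take (k + 1 - A.length) (B ++ A) := by
            rw [← min_eq_left hm, ← take_take, hAB, take_take]
        _ = take (k + 1 - A.length) B := take_append_of_le_length (by omega)
        _ <+: B := take_prefix _ _
    · rw [← append_assoc, take_append_of_le_length (by simp; omega)]
      exact take_prefix _ _

end List

open List

theorem stmt0_general {α : Type*} (A B : List α) (hA : A ≠ []) (hB : B ≠ [])
    (hAB : A ++ B ≠ B ++ A) :
    ∃ u : List α, u.length < A.length + B.length ∧
      ∀ x y : List α,
        (∃ l : List (List α), (∀ w ∈ l, w = A ∨ w = B) ∧ x = A ++ l.flatten) →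
        (∃ l : List (List α), (∀ w ∈ l, w = A ∨ w = B) ∧ y = B ++ l.flatten) →
        (u.length ≤ x.length → u <+: x) ∧
        (u.length ≤ y.length → u <+: y) ∧
        (∀ (hx : u.length < x.length) (hy : u.length < y.length),
          x[u.length]'hx ≠ y[u.length]'hy) := by
  obtain ⟨k, htake, hne⟩ := exists_take_eq_take_and_getElem?_ne hAB
  have hk : k < A.length + B.length := by
    by_contra! hk
    exact hne (by rw [getElem?_eq_none (by simpa), getElem?_eq_none (by simp; omega)])
  have hu : ((A ++ B).take k).length = k := by simp; omega
  refine ⟨(A ++ B).take k, by omega, ?_⟩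
  rintro x y ⟨lx, hlx, rfl⟩ ⟨ly, hly, rfl⟩
  have hx := take_succ_append_flatten_prefix hA hk htake hlx
  have hy := take_succ_append_flatten_prefix hB (by omega) htake.symm fun w hw => (hly w hw).symm
  simp only [hu]
  refine ⟨take_prefix_of_take_succ_prefix hx, htake ▸ take_prefix_of_take_succ_prefix hy,
    fun hxk hyk hxy => hne ?_⟩
  rw [← getElem?_eq_of_take_succ_prefix hx hxk, ← getElem?_eq_of_take_succ_prefix hy hyk,
    getElem?_eq_getElem hxk, getElem?_eq_getElem hyk, hxy]

/-- a Fine–Wilf-type separation lemma (Lemma `lem:prefix` variant). -/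
theorem stmt0 {α : Type*} [Fintype α] (A B : List α) (hA : A ≠ []) (hB : B ≠ [])
    (hAB : A ++ B ≠ B ++ A) :
    ∃ u : List α, u.length < A.length + B.length ∧
      ∀ x y : List α,
        (∃ l : List (List α), (∀ w ∈ l, w = A ∨ w = B) ∧ x = A ++ l.flatten) →
        (∃ l : List (List α), (∀ w ∈ l, w = A ∨ w = B) ∧ y = B ++ l.flatten) →
        (u.length ≤ x.length → u <+: x) ∧
        (u.length ≤ y.length → u <+: y) ∧
        (∀ (hx : u.length < x.length) (hy : u.length < y.length),
          x[u.length]'hx ≠ y[u.length]'hy) :=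
  stmt0_general A B hA hB hAB
end

section
/- Let G = (V,E) be a strongly connected finite directed multigraph and let V′ = {v ∈ V : d⁺(v) ≥ 2}. Assume V′ is non-empty. Then the subgraph of G induced by V ∖ V′ is a directed forest: it contains no undirected cycle, i.e. there is no non-empty closed walk using pairwise distinct edges of the induced subgraph in which each edge may be traversed in either direction. -/
open Filter Topology
open scoped ENNReal

/-!
A closed undirected trail on `n` distinct edges visits at most `n` vertices. If every vertex it
visits has outdegree at most one, its `n` edges therefore exhaust all edges leaving its vertex set
`U`, so every edge leaving `U` ends in `U`. Strong connectivity then forces `U` to be everything,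
which is impossible once some vertex has outdegree at least two.
-/

section Digraph

variable {V E : Type*} (s r : E → V)

theorem mem_of_injOn_source_of_card_le [DecidableEq E] {U : Finset V} {W : Finset E}
    (hinj : Set.InjOn s {x | s x ∈ U}) (hW : ∀ x ∈ W, s x ∈ U) (hcard : U.card ≤ W.card)
    {x : E} (hx : s x ∈ U) : x ∈ W := by
  by_contra hxW
  have hmaps : Set.MapsTo s ↑(insert x W) ↑U := by simpa [Set.MapsTo, hx] using hW
  have hle : (insert x W).card ≤ U.card :=
    Finset.card_le_card_of_injOn s hmaps (hinj.mono fun y hy => hmaps hy)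
  rw [Finset.card_insert_of_notMem hxW] at hle
  omega

theorem walk_mem_of_forall_range_mem {P : Set V} (hP : ∀ x, s x ∈ P → r x ∈ P) {ℓ : ℕ}
    {e : Fin ℓ → E} {v : Fin (ℓ + 1) → V}
    (hwalk : ∀ i, s (e i) = v i.castSucc ∧ r (e i) = v i.succ) (h0 : v 0 ∈ P)
    (i : Fin (ℓ + 1)) : v i ∈ P :=
  Fin.induction h0 (fun i hi => (hwalk i).2 ▸ hP _ ((hwalk i).1 ▸ hi)) i

theorem endpoints_mem_of_oriented {P : Set V} {x : E} {a b : V} {o : Bool} (ha : a ∈ P)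
    (hb : b ∈ P) (h : (o = true → s x = a ∧ r x = b) ∧ (o = false → r x = a ∧ s x = b)) :
    (s x ∈ P ∧ r x ∈ P) ∧ (a = s x ∨ a = r x) := by
  cases o
  · obtain ⟨hr, hs⟩ := h.2 rfl
    exact ⟨⟨hs ▸ hb, hr ▸ ha⟩, Or.inr hr.symm⟩
  · obtain ⟨hs, hr⟩ := h.1 rfl
    exact ⟨⟨hs ▸ ha, hr ▸ hb⟩, Or.inl hs.symm⟩

end Digraph

theorem Fin.mem_image_castSucc_of_closed {α : Type*} [DecidableEq α] {n : ℕ}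
    {v : Fin (n + 2) → α} (hclose : v 0 = v (Fin.last (n + 1))) (j : Fin (n + 2)) :
    v j ∈ Finset.univ.image fun i : Fin (n + 1) => v i.castSucc := by
  induction j using Fin.lastCases with
  | last => exact hclose ▸ Finset.mem_image_of_mem _ (Finset.mem_univ 0)
  | cast i => exact Finset.mem_image_of_mem _ (Finset.mem_univ i)

theorem stmt1_general {V E : Type*} [Fintype E] (s r : E → V)
    (hconn : ∀ u w : V, u ≠ w → ∃ (ℓ : ℕ) (e : Fin ℓ → E) (v : Fin (ℓ+1) → V),
      Function.Injective e ∧ Function.Injective v ∧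
      v 0 = u ∧ v (Fin.last ℓ) = w ∧
      ∀ i : Fin ℓ, s (e i) = v i.castSucc ∧ r (e i) = v i.succ)
    (hV' : ∃ v : V, 2 ≤ Set.ncard {e : E | s e = v}) :
    ¬ ∃ (ℓ : ℕ) (e : Fin (ℓ+1) → E) (o : Fin (ℓ+1) → Bool) (v : Fin (ℓ+2) → V),
      Function.Injective e ∧
      (∀ i : Fin (ℓ+1), ¬ 2 ≤ Set.ncard {e' : E | s e' = s (e i)} ∧
                        ¬ 2 ≤ Set.ncard {e' : E | s e' = r (e i)}) ∧
      v 0 = v (Fin.last (ℓ+1)) ∧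
      (∀ i : Fin (ℓ+1),
        (o i = true → s (e i) = v i.castSucc ∧ r (e i) = v i.succ) ∧
        (o i = false → r (e i) = v i.castSucc ∧ s (e i) = v i.succ)) := by
  classical
  rintro ⟨ℓ, e, o, v, he, hdeg, hclose, htrail⟩
  obtain ⟨w, hw⟩ := hV'
  set U := Finset.univ.image fun i : Fin (ℓ + 1) => v i.castSucc
  have hvU := Fin.mem_image_castSucc_of_closed hclose
  have hends (i : Fin (ℓ + 1)) :=
    endpoints_mem_of_oriented s r (P := ↑U) (hvU i.castSucc) (hvU i.succ) (htrail i)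
  have hdegU : ∀ u ∈ U, {x | s x = u}.ncard ≤ 1 := by
    simp only [U, Finset.mem_image, Finset.mem_univ, true_and, forall_exists_index,
      forall_apply_eq_imp_iff]
    intro i
    obtain ⟨hs, hr⟩ := hdeg i
    rcases (hends i).2 with h | h <;> rw [h] <;> omega
  have hinj : Set.InjOn s {x | s x ∈ U} := fun x hx y _ hxy =>
    Set.ncard_le_one_iff_subsingleton.mp (hdegU _ hx) rfl hxy.symm
  have hclosed : ∀ x, s x ∈ U → r x ∈ U := by
    intro x hx
    have hcard : U.card ≤ (Finset.univ.image e).card :=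
      Finset.card_image_le.trans (Finset.card_image_of_injective _ he).ge
    obtain ⟨i, -, rfl⟩ := Finset.mem_image.mp (mem_of_injOn_source_of_card_le s hinj
      (by simpa using fun i => (hends i).1.1) hcard hx)
    exact (hends i).1.2
  have hwU : w ∉ U := fun h => by have := hdegU w h; omega
  have hv0 : v 0 ≠ w := fun h => hwU (h ▸ hvU 0)
  obtain ⟨ℓ', f, p, -, -, hp0, hpw, hwalk⟩ := hconn (v 0) w hv0
  exact hwU (hpw ▸ walk_mem_of_forall_range_mem s r hclosed hwalk (hp0 ▸ hvU 0) _)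

/-- in a strongly connected finite directed multigraph, the subgraph induced by
the vertices of outdegree at most 1 is a directed forest (no undirected cycle). -/
theorem stmt1 {V E : Type*} [Fintype V] [Fintype E] (s r : E → V)
    (hconn : ∀ u w : V, u ≠ w → ∃ (ℓ : ℕ) (e : Fin ℓ → E) (v : Fin (ℓ+1) → V),
      Function.Injective e ∧ Function.Injective v ∧
      v 0 = u ∧ v (Fin.last ℓ) = w ∧
      ∀ i : Fin ℓ, s (e i) = v i.castSucc ∧ r (e i) = v i.succ)
    (hV' : ∃ v : V, 2 ≤ Set.ncard {e : E | s e = v}) :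
    ¬ ∃ (ℓ : ℕ) (e : Fin (ℓ+1) → E) (o : Fin (ℓ+1) → Bool) (v : Fin (ℓ+2) → V),
      Function.Injective e ∧
      (∀ i : Fin (ℓ+1), ¬ 2 ≤ Set.ncard {e' : E | s e' = s (e i)} ∧
                        ¬ 2 ≤ Set.ncard {e' : E | s e' = r (e i)}) ∧
      v 0 = v (Fin.last (ℓ+1)) ∧
      (∀ i : Fin (ℓ+1),
        (o i = true → s (e i) = v i.castSucc ∧ r (e i) = v i.succ) ∧
        (o i = false → r (e i) = v i.castSucc ∧ s (e i) = v i.succ)) :=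
  stmt1_general s r hconn hV'
end

section
/- Let τ: 𝒜* → ℬ* and σ: ℬ* → 𝒞* be non-erasing morphisms, let Y ⊆ 𝒜^ℤ be a subshift, and let X be the smallest subshift containing τ(Y). Then σ ∘ τ is recognizable in Y if and only if τ is recognizable in Y and σ is recognizable in X. -/
open Filter Topology
open scoped ENNReal

/-! Cutting `τ(y)` at the cumulative lengths `cumLen τ y`, a strictly increasing map `ℤ → ℤ`,
makes the two-sided image unique, and `cumLen (σ ∘ τ) y = cumLen σ (τ y) ∘ cumLen τ y`.
Hence a centered `σ ∘ τ`-representation `(K, y)` of `u` amounts to a centered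
`τ`-representation `(k, y)` of some `x` followed by a centered `σ`-representation `(j, x)` of
`u`, with `K = cumLen σ (τ y) k + j`, and `K` determines `(k, j)` because `j < |σ(x₀)|`.
Recognizability transfers along this correspondence in both directions. The only topological
input is that every point of `X` has a centered `τ`-representation: such points form a closed set
(`Y` is compact and `y ↦ τ(y)` is continuous) that is shift-invariant and contains `τ(Y)`. -/

lemma StrictMono.exists_le_lt_succ {f : ℤ → ℤ} (hf : StrictMono f) (m : ℤ) :
    ∃ n, f n ≤ m ∧ m < f (n + 1) := by
  have hgrowth : Monotone fun n => f n - n :=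
    monotone_int_of_le_succ fun n => by have := hf (lt_add_one n); omega
  obtain ⟨n, hn, hmax⟩ := Int.exists_greatest_of_bdd (P := fun n => f n ≤ m)
    ⟨max 0 (m - f 0), fun n hn => by
      by_contra h
      have := hgrowth (show 0 ≤ n by omega)
      simp only [sub_zero] at this
      omega⟩
    ⟨min 0 (m - f 0), by
      have := hgrowth (min_le_left 0 (m - f 0))
      simp only [sub_zero] at this
      omega⟩
  exact ⟨n, hn, not_le.mp fun h => by have := hmax _ h; omega⟩

lemma StrictMono.eq_of_le_lt_succ {α : Type*} [Preorder α] {f : ℤ → α} (hf : StrictMono f)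
    {m : α} {n n' : ℤ} (h : f n ≤ m) (hs : m < f (n + 1)) (h' : f n' ≤ m)
    (hs' : m < f (n' + 1)) : n = n' := by
  by_contra hne
  rcases lt_or_gt_of_ne hne with hlt | hlt
  · exact (hs.trans_le ((hf.monotone (Int.add_one_le_of_lt hlt)).trans h')).false
  · exact (hs'.trans_le ((hf.monotone (Int.add_one_le_of_lt hlt)).trans h)).false

section CumLen

variable {A B : Type*}

@[simp] lemma shiftBy_zero (x : ℤ → A) : shiftBy 0 x = x :=
  funext fun n => by simp [shiftBy]

lemma shiftBy_shiftBy (a b : ℤ) (x : ℤ → A) : shiftBy a (shiftBy b x) = shiftBy (a + b) x :=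
  funext fun n => by simp [shiftBy, add_assoc]

lemma cumLen_zero (τ : A → List B) (y : ℤ → A) : cumLen τ y 0 = 0 := by simp [cumLen]

lemma cumLen_succ (τ : A → List B) (y : ℤ → A) (n : ℤ) :
    cumLen τ y (n + 1) = cumLen τ y n + (τ (y n)).length := by
  rcases le_or_gt 0 n with h | h
  · rw [cumLen, cumLen, if_pos (by omega), if_pos h,
      show (n + 1).toNat = n.toNat + 1 by omega, Finset.sum_range_succ, Int.toNat_of_nonneg h]
  · have hM : (-n).toNat = (-(n + 1)).toNat + 1 := by omega
    rw [cumLen, cumLen, if_neg (by omega : ¬ 0 ≤ n), hM, Finset.sum_range_succ,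
      show -(((-(n + 1)).toNat : ℤ)) - 1 = n by omega]
    rcases eq_or_lt_of_le (show n + 1 ≤ 0 by omega) with h1 | h1
    · rw [if_pos (by omega), show (n + 1).toNat = 0 by omega, show (-(n + 1)).toNat = 0 by omega]
      simp
    · rw [if_neg (by omega)]
      ring

lemma cumLen_one (τ : A → List B) (y : ℤ → A) : cumLen τ y 1 = (τ (y 0)).length := by
  simpa [cumLen_zero] using cumLen_succ τ y 0

lemma eq_cumLen_of_succ {τ : A → List B} {y : ℤ → A} {f : ℤ → ℤ} (h0 : f 0 = 0)
    (hs : ∀ n, f (n + 1) = f n + (τ (y n)).length) (n : ℤ) : f n = cumLen τ y n := by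
  induction n using Int.induction_on with
  | zero => rw [h0, cumLen_zero]
  | succ k ih => rw [hs, cumLen_succ, ih]
  | pred k ih =>
    have h1 := hs (-k - 1)
    have h2 := cumLen_succ τ y (-k - 1)
    rw [sub_add_cancel] at h1 h2
    omega

lemma cumLen_shiftBy (τ : A → List B) (y : ℤ → A) (d n : ℤ) :
    cumLen τ (shiftBy d y) n = cumLen τ y (n + d) - cumLen τ y d := by
  refine (eq_cumLen_of_succ (f := fun n => cumLen τ y (n + d) - cumLen τ y d) (by simp)
    (fun n => ?_) n).symm
  simp only [add_right_comm n 1 d, cumLen_succ, shiftBy]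
  ring

lemma cumLen_congr {τ : A → List B} {y y' : ℤ → A} {n : ℤ}
    (h : ∀ i, min n 0 ≤ i → i < max n 0 → y i = y' i) : cumLen τ y n = cumLen τ y' n := by
  rcases le_or_gt 0 n with hn | hn
  · rw [cumLen, cumLen, if_pos hn, if_pos hn]
    refine Finset.sum_congr rfl fun i hi => ?_
    rw [Finset.mem_range] at hi
    rw [h i (by omega) (by omega)]
  · rw [cumLen, cumLen, if_neg (by omega), if_neg (by omega)]
    refine congrArg _ (Finset.sum_congr rfl fun i hi => ?_)
    rw [Finset.mem_range] at hi
    rw [h (-(i : ℤ) - 1) (by omega) (by omega)]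

lemma NonErasing.cumLen_strictMono {τ : A → List B} (hτ : NonErasing τ) (y : ℤ → A) :
    StrictMono (cumLen τ y) :=
  strictMono_int_of_lt_succ fun n => by
    have := List.length_pos_iff.mpr (hτ (y n))
    rw [cumLen_succ]
    omega

lemma NonErasing.cumLen_nonneg {τ : A → List B} (hτ : NonErasing τ) (y : ℤ → A) {n : ℤ}
    (hn : 0 ≤ n) : 0 ≤ cumLen τ y n :=
  cumLen_zero τ y ▸ (hτ.cumLen_strictMono y).monotone hn

end CumLen

section SeqImage

variable {A B : Type*} {τ : A → List B}

lemma IsSeqImage.apply_eq {y : ℤ → A} {z : ℤ → B} (hz : IsSeqImage τ y z) {n m : ℤ}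
    (h : cumLen τ y n ≤ m) (hs : m < cumLen τ y (n + 1)) :
    z m = (τ (y n))[(m - cumLen τ y n).toNat]'(by rw [cumLen_succ] at hs; omega) := by
  have := hz n ⟨(m - cumLen τ y n).toNat, by rw [cumLen_succ] at hs; omega⟩
  rwa [show cumLen τ y n + (((m - cumLen τ y n).toNat : ℕ) : ℤ) = m by omega] at this

noncomputable def seqIdx (hτ : NonErasing τ) (y : ℤ → A) (m : ℤ) : ℤ :=
  ((hτ.cumLen_strictMono y).exists_le_lt_succ m).choose

lemma seqIdx_spec (hτ : NonErasing τ) (y : ℤ → A) (m : ℤ) :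
    cumLen τ y (seqIdx hτ y m) ≤ m ∧ m < cumLen τ y (seqIdx hτ y m + 1) :=
  ((hτ.cumLen_strictMono y).exists_le_lt_succ m).choose_spec

lemma seqIdx_eq (hτ : NonErasing τ) {y : ℤ → A} {n m : ℤ} (h : cumLen τ y n ≤ m)
    (hs : m < cumLen τ y (n + 1)) : seqIdx hτ y m = n :=
  (hτ.cumLen_strictMono y).eq_of_le_lt_succ (seqIdx_spec hτ y m).1 (seqIdx_spec hτ y m).2 h hs

noncomputable def seqImage (hτ : NonErasing τ) (y : ℤ → A) : ℤ → B := fun m =>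
  (τ (y (seqIdx hτ y m)))[(m - cumLen τ y (seqIdx hτ y m)).toNat]'(by
    have := seqIdx_spec hτ y m
    rw [cumLen_succ] at this
    omega)

lemma seqImage_eq (hτ : NonErasing τ) {y : ℤ → A} {n m : ℤ} (h : cumLen τ y n ≤ m)
    (hs : m < cumLen τ y (n + 1)) :
    seqImage hτ y m = (τ (y n))[(m - cumLen τ y n).toNat]'(by rw [cumLen_succ] at hs; omega) := by
  obtain rfl := seqIdx_eq hτ h hs
  rfl

lemma isSeqImage_seqImage (hτ : NonErasing τ) (y : ℤ → A) : IsSeqImage τ y (seqImage hτ y) := by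
  intro n j
  have := cumLen_succ τ y n
  rw [seqImage_eq hτ (n := n) (by omega) (by omega)]
  rw [List.get_eq_getElem]
  congr 1
  omega

lemma IsSeqImage.eq_seqImage (hτ : NonErasing τ) {y : ℤ → A} {z : ℤ → B}
    (hz : IsSeqImage τ y z) : z = seqImage hτ y :=
  funext fun m => hz.apply_eq (seqIdx_spec hτ y m).1 (seqIdx_spec hτ y m).2

lemma IsSeqImage.shiftBy {y : ℤ → A} {z : ℤ → B} (hz : IsSeqImage τ y z) (d : ℤ) :
    IsSeqImage τ (shiftBy d y) (shiftBy (cumLen τ y d) z) := by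
  intro n j
  show z (cumLen τ (_root_.shiftBy d y) n + ((j : ℕ) : ℤ) + cumLen τ y d) = _
  rw [cumLen_shiftBy, sub_add_eq_add_sub, sub_add_cancel]
  exact hz (n + d) j

lemma seqImage_shiftBy (hτ : NonErasing τ) (y : ℤ → A) (d : ℤ) :
    seqImage hτ (shiftBy d y) = shiftBy (cumLen τ y d) (seqImage hτ y) :=
  (((isSeqImage_seqImage hτ y).shiftBy d).eq_seqImage hτ).symm

lemma isCenteredRep_iff (hτ : NonErasing τ) {Y : Set (ℤ → A)} {x : ℤ → B} {k : ℕ} {y : ℤ → A} :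
    IsCenteredRep τ Y x k y ↔ y ∈ Y ∧ k < (τ (y 0)).length ∧ x = shiftBy k (seqImage hτ y) := by
  refine ⟨fun ⟨hy, hk, z, hz, hx⟩ => ⟨hy, hk, hz.eq_seqImage hτ ▸ hx⟩,
    fun ⟨hy, hk, hx⟩ => ⟨hy, hk, _, isSeqImage_seqImage hτ y, hx⟩⟩

lemma seqImage_apply_congr (hτ : NonErasing τ) {y y' : ℤ → A} {m : ℤ}
    (h : ∀ i, min (seqIdx hτ y m) 0 ≤ i → i ≤ max (seqIdx hτ y m) 0 → y' i = y i) :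
    seqImage hτ y' m = seqImage hτ y m := by
  set n := seqIdx hτ y m
  obtain ⟨hn, hn'⟩ := seqIdx_spec hτ y m
  have hyn : y' n = y n := h n (by omega) (by omega)
  have hc : cumLen τ y' n = cumLen τ y n := cumLen_congr fun i h1 h2 => h i (by omega) (by omega)
  have hc' : cumLen τ y' (n + 1) = cumLen τ y (n + 1) :=
    cumLen_congr fun i h1 h2 => h i (by omega) (by omega)
  rw [seqImage_eq hτ (hc ▸ hn) (hc' ▸ hn'), seqImage_eq hτ hn hn']
  simp only [hyn, hc, n]

end SeqImage

section RepSet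

variable {A B : Type*} {τ : A → List B}

lemma continuous_seqImage_apply [TopologicalSpace A] [DiscreteTopology A] [TopologicalSpace B]
    (hτ : NonErasing τ) (m : ℤ) : Continuous fun y => seqImage hτ y m := by
  refine IsLocallyConstant.continuous ((IsLocallyConstant.iff_eventually_eq _).2 fun y => ?_)
  have hnear : ∀ᶠ y' in 𝓝 y, ∀ i ∈ Finset.Icc (min (seqIdx hτ y m) 0) (max (seqIdx hτ y m) 0),
      y' i = y i :=
    (Filter.eventually_all_finset _).2 fun i _ =>
      tendsto_pure.1 (by simpa [nhds_discrete] using (continuous_apply i).tendsto y)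
  filter_upwards [hnear] with y' hy'
  exact seqImage_apply_congr hτ fun i h1 h2 => hy' i (Finset.mem_Icc.2 ⟨h1, h2⟩)

def repSet (τ : A → List B) (Y : Set (ℤ → A)) : Set (ℤ → B) :=
  {x | ∃ k y, IsCenteredRep τ Y x k y}

lemma isClosed_repSet [Finite A] [TopologicalSpace A] [DiscreteTopology A] [TopologicalSpace B]
    [T2Space B] (hτ : NonErasing τ) {Y : Set (ℤ → A)} (hY : IsClosed Y) :
    IsClosed (repSet τ Y) := by
  have hrep : repSet τ Y = ⋃ (a : A) (k : Fin (τ a).length),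
      (fun y => shiftBy k (seqImage hτ y)) '' {y | y ∈ Y ∧ y 0 = a} := by
    ext x
    simp only [repSet, isCenteredRep_iff hτ, Set.mem_iUnion, Set.mem_image]
    constructor
    · rintro ⟨k, y, hy, hk, rfl⟩
      exact ⟨y 0, ⟨k, hk⟩, y, ⟨hy, rfl⟩, rfl⟩
    · rintro ⟨a, k, y, ⟨hy, rfl⟩, rfl⟩
      exact ⟨k, y, hy, k.2, rfl⟩
  rw [hrep]
  refine isClosed_iUnion_of_finite fun a => isClosed_iUnion_of_finite fun k => ?_
  have hcont : Continuous fun y => shiftBy k (seqImage hτ y) :=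
    continuous_pi fun n => continuous_seqImage_apply hτ (n + k)
  exact ((hY.inter (isClosed_eq (continuous_apply 0) continuous_const)).isCompact.image
    hcont).isClosed

lemma shiftBy_seqImage_mem_repSet (hτ : NonErasing τ) {Y : Set (ℤ → A)}
    (hY : ∀ k, ∀ y ∈ Y, shiftBy k y ∈ Y) {y : ℤ → A} (hy : y ∈ Y) (K : ℤ) :
    shiftBy K (seqImage hτ y) ∈ repSet τ Y := by
  obtain ⟨n, hn, hn'⟩ := (hτ.cumLen_strictMono y).exists_le_lt_succ K
  rw [cumLen_succ] at hn'
  refine ⟨(K - cumLen τ y n).toNat, shiftBy n y, (isCenteredRep_iff hτ).2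
    ⟨hY n y hy, by simp only [shiftBy, zero_add]; omega, ?_⟩⟩
  rw [seqImage_shiftBy, shiftBy_shiftBy, Int.toNat_of_nonneg (by omega), sub_add_cancel]

lemma IsSmallestSubshiftContaining.subset_repSet [Finite A] [TopologicalSpace A]
    [DiscreteTopology A] [TopologicalSpace B] [T2Space B] (hτ : NonErasing τ)
    {Y : Set (ℤ → A)} (hY : IsSubshift Y) {X : Set (ℤ → B)}
    (hX : IsSmallestSubshiftContaining τ Y X) : X ⊆ repSet τ Y := by
  refine hX.2.2 _ ⟨isClosed_repSet hτ hY.1, ?_⟩ fun y hy z hz => ?_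
  · rintro d x ⟨k, y, hrep⟩
    obtain ⟨hy, -, rfl⟩ := (isCenteredRep_iff hτ).1 hrep
    rw [shiftBy_shiftBy]
    exact shiftBy_seqImage_mem_repSet hτ hY.2 hy _
  · simpa [hz.eq_seqImage hτ] using shiftBy_seqImage_mem_repSet hτ hY.2 hy 0

end RepSet

section Composition

variable {A B C : Type*}

@[simp] lemma length_factorAt (x : ℤ → A) (m : ℤ) (len : ℕ) : (factorAt x m len).length = len := by
  simp [factorAt]

-- The cast in `factorAt` elaborates as a bind in the list monad, hence `List.map_eq_flatMap`.
@[simp] lemma getElem_factorAt (x : ℤ → A) (m : ℤ) (len i : ℕ) (h : i < (factorAt x m len).length) :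
    (factorAt x m len)[i] = x (m + i) := by
  simp [factorAt, ← List.map_eq_flatMap]

lemma factorAt_succ (x : ℤ → A) (m : ℤ) (len : ℕ) :
    factorAt x m (len + 1) = factorAt x m len ++ [x (m + len)] := by
  simp [factorAt, ← List.map_eq_flatMap, List.range_succ]

lemma factorAt_add (x : ℤ → A) (m : ℤ) (a b : ℕ) :
    factorAt x m (a + b) = factorAt x m a ++ factorAt x (m + a) b := by
  refine List.ext_getElem (by simp) fun i h _ => ?_
  simp only [length_factorAt] at h
  rcases lt_or_ge i a with hi | hi
  · simp [List.getElem_append_left, hi]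
  · rw [List.getElem_append_right (by simpa using hi)]
    simp only [getElem_factorAt, length_factorAt]
    congr 1
    omega

@[simp] lemma wordImage_append (σ : B → List C) (u v : List B) :
    wordImage σ (u ++ v) = wordImage σ u ++ wordImage σ v := by
  simp [wordImage]

@[simp] lemma wordImage_singleton (σ : B → List C) (b : B) : wordImage σ [b] = σ b := by
  simp [wordImage]

lemma isSeqImage_iff_factorAt {τ : A → List B} {y : ℤ → A} {z : ℤ → B} :
    IsSeqImage τ y z ↔ ∀ n, factorAt z (cumLen τ y n) (τ (y n)).length = τ (y n) := by
  refine ⟨fun h n => List.ext_getElem (by simp) fun j hj _ => ?_, fun h n j => ?_⟩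
  · simpa using h n ⟨j, by simpa using hj⟩
  · simpa using List.getElem_of_eq (h n) (by simp : (j : ℕ) < (factorAt _ _ _).length)

lemma cumLen_add_natCast (σ : B → List C) (z : ℤ → B) (p : ℤ) (len : ℕ) :
    cumLen σ z (p + len) = cumLen σ z p + (wordImage σ (factorAt z p len)).length := by
  induction len with
  | zero => simp [factorAt, wordImage]
  | succ len ih =>
    rw [Nat.cast_succ, ← add_assoc, cumLen_succ, ih, factorAt_succ]
    simp only [wordImage_append, wordImage_singleton, List.length_append]
    push_cast
    ring

lemma IsSeqImage.factorAt_wordImage {σ : B → List C} {z : ℤ → B} {v : ℤ → C}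
    (hv : IsSeqImage σ z v) (p : ℤ) (len : ℕ) :
    factorAt v (cumLen σ z p) (wordImage σ (factorAt z p len)).length =
      wordImage σ (factorAt z p len) := by
  induction len with
  | zero => simp [factorAt, wordImage]
  | succ len ih =>
    rw [factorAt_succ, wordImage_append, wordImage_singleton, List.length_append, factorAt_add,
      ih, ← cumLen_add_natCast, isSeqImage_iff_factorAt.1 hv]

lemma cumLen_morphComp {σ : B → List C} {τ : A → List B} {y : ℤ → A} {z : ℤ → B}
    (hz : IsSeqImage τ y z) (n : ℤ) :
    cumLen (morphComp σ τ) y n = cumLen σ z (cumLen τ y n) := by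
  refine (eq_cumLen_of_succ (f := fun n => cumLen σ z (cumLen τ y n)) (by simp [cumLen_zero])
    (fun n => ?_) n).symm
  rw [cumLen_succ τ, cumLen_add_natCast, isSeqImage_iff_factorAt.1 hz]
  rfl

lemma IsSeqImage.morphComp {σ : B → List C} {τ : A → List B} {y : ℤ → A} {z : ℤ → B}
    {v : ℤ → C} (hz : IsSeqImage τ y z) (hv : IsSeqImage σ z v) :
    IsSeqImage (morphComp σ τ) y v := by
  refine isSeqImage_iff_factorAt.2 fun n => ?_
  have := hv.factorAt_wordImage (cumLen τ y n) (τ (y n)).length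
  rwa [isSeqImage_iff_factorAt.1 hz, ← cumLen_morphComp hz] at this

lemma NonErasing.morphComp {σ : B → List C} {τ : A → List B} (hσ : NonErasing σ)
    (hτ : NonErasing τ) : NonErasing (morphComp σ τ) := fun a h => by
  obtain ⟨b, w, hbw⟩ := List.exists_cons_of_ne_nil (hτ a)
  simp only [_root_.morphComp, wordImage, hbw, List.map_cons, List.flatten_cons,
    List.append_eq_nil_iff] at h
  exact hσ b h.1

lemma seqImage_morphComp {σ : B → List C} {τ : A → List B} (hσ : NonErasing σ)
    (hτ : NonErasing τ) (y : ℤ → A) :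
    seqImage (hσ.morphComp hτ) y = seqImage hσ (seqImage hτ y) :=
  (((isSeqImage_seqImage hτ y).morphComp (isSeqImage_seqImage hσ _)).eq_seqImage _).symm

end Composition

section Recognizability

variable {A B C : Type*} {σ : B → List C} {τ : A → List B}

lemma IsSeqImage.length_morphComp {y : ℤ → A} {z : ℤ → B} (hz : IsSeqImage τ y z) :
    ((_root_.morphComp σ τ (y 0)).length : ℤ) = cumLen σ z (τ (y 0)).length := by
  simpa only [cumLen_one] using cumLen_morphComp (σ := σ) hz 1

lemma NonErasing.eq_of_cumLen_add_eq (hσ : NonErasing σ) {z : ℤ → B} {k k' : ℤ} {j j' : ℕ}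
    (hj : j < (σ (z k)).length) (hj' : j' < (σ (z k')).length)
    (h : cumLen σ z k + j = cumLen σ z k' + j') : k = k' ∧ j = j' := by
  have hs := cumLen_succ σ z k
  have hs' := cumLen_succ σ z k'
  obtain rfl : k = k' := (hσ.cumLen_strictMono z).eq_of_le_lt_succ (m := cumLen σ z k + j)
    (by omega) (by omega) (by omega) (by omega)
  exact ⟨rfl, by omega⟩

lemma IsCenteredRep.morphComp (hσ : NonErasing σ) (hτ : NonErasing τ) {Y : Set (ℤ → A)}
    {X : Set (ℤ → B)} {u : ℤ → C} {x : ℤ → B} {y : ℤ → A} {k j : ℕ}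
    (hx : IsCenteredRep τ Y x k y) (hu : IsCenteredRep σ X u j x) :
    ∃ K : ℕ, (K : ℤ) = cumLen σ (seqImage hτ y) k + j ∧
      IsCenteredRep (_root_.morphComp σ τ) Y u K y := by
  obtain ⟨hy, hk, rfl⟩ := (isCenteredRep_iff hτ).1 hx
  obtain ⟨-, hj, rfl⟩ := (isCenteredRep_iff hσ).1 hu
  have hlen := (isSeqImage_seqImage hτ y).length_morphComp (σ := σ)
  set z := seqImage hτ y
  have hK : 0 ≤ cumLen σ z k + j := by
    have := hσ.cumLen_nonneg z (Int.natCast_nonneg k)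
    omega
  refine ⟨(cumLen σ z k + j).toNat, Int.toNat_of_nonneg hK,
    (isCenteredRep_iff (hσ.morphComp hτ)).2 ⟨hy, ?_, ?_⟩⟩
  · have hmono := (hσ.cumLen_strictMono z).monotone (show (k : ℤ) + 1 ≤ (τ (y 0)).length by omega)
    have hs := cumLen_succ σ z k
    simp only [shiftBy, zero_add] at hj
    omega
  · rw [seqImage_morphComp, seqImage_shiftBy, shiftBy_shiftBy, Int.toNat_of_nonneg hK, add_comm]

lemma IsCenteredRep.exists_of_morphComp (hσ : NonErasing σ) (hτ : NonErasing τ)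
    {Y : Set (ℤ → A)} {X : Set (ℤ → B)} {u : ℤ → C} {y : ℤ → A} {K : ℕ}
    (hX : ∀ d : ℤ, shiftBy d (seqImage hτ y) ∈ X)
    (h : IsCenteredRep (_root_.morphComp σ τ) Y u K y) :
    ∃ (k j : ℕ) (x : ℤ → B), IsCenteredRep τ Y x k y ∧ IsCenteredRep σ X u j x ∧
      (K : ℤ) = cumLen σ (seqImage hτ y) k + j := by
  obtain ⟨hy, hK, rfl⟩ := (isCenteredRep_iff (hσ.morphComp hτ)).1 h
  have hlen := (isSeqImage_seqImage hτ y).length_morphComp (σ := σ)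
  set z := seqImage hτ y
  have hmono := hσ.cumLen_strictMono z
  obtain ⟨n, hn, hn'⟩ := hmono.exists_le_lt_succ K
  have hn0 : 0 ≤ n := by
    have := hmono.lt_iff_lt.1 (show cumLen σ z 0 < cumLen σ z (n + 1) by
      rw [cumLen_zero]; omega)
    omega
  have hnlen : n < (τ (y 0)).length :=
    hmono.lt_iff_lt.1 (show cumLen σ z n < cumLen σ z (τ (y 0)).length by omega)
  lift n to ℕ using hn0
  rw [cumLen_succ] at hn'
  refine ⟨n, (K - cumLen σ z n).toNat, shiftBy n z,
    (isCenteredRep_iff hτ).2 ⟨hy, by exact_mod_cast hnlen, rfl⟩,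
    (isCenteredRep_iff hσ).2 ⟨hX n, by simp only [shiftBy, zero_add]; omega, ?_⟩, by omega⟩
  rw [seqImage_morphComp, seqImage_shiftBy, shiftBy_shiftBy, Int.toNat_of_nonneg (by omega),
    sub_add_cancel]

lemma RecognizableIn.of_morphComp_left (hσ : NonErasing σ) (hτ : NonErasing τ)
    {Y : Set (ℤ → A)} (h : RecognizableIn (morphComp σ τ) Y) : RecognizableIn τ Y := by
  intro x k k' y y' hx hx'
  have hu : IsCenteredRep σ Set.univ (seqImage hσ x) 0 x :=
    (isCenteredRep_iff hσ).2 ⟨trivial, List.length_pos_iff.2 (hσ _), by simp⟩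
  obtain ⟨K, hK, hrep⟩ := hx.morphComp hσ hτ hu
  obtain ⟨K', hK', hrep'⟩ := hx'.morphComp hσ hτ hu
  obtain ⟨rfl, rfl⟩ := h _ _ _ _ _ hrep hrep'
  refine ⟨?_, rfl⟩
  exact_mod_cast (hσ.cumLen_strictMono _).injective (by omega :
    cumLen σ (seqImage hτ y) k = cumLen σ (seqImage hτ y) k')

lemma RecognizableIn.of_morphComp_right (hσ : NonErasing σ) (hτ : NonErasing τ)
    {Y : Set (ℤ → A)} {X : Set (ℤ → B)} (hXY : X ⊆ repSet τ Y)
    (h : RecognizableIn (morphComp σ τ) Y) : RecognizableIn σ X := by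
  intro u j j' x x' hu hu'
  obtain ⟨k, y, hx⟩ := hXY hu.1
  obtain ⟨k', y', hx'⟩ := hXY hu'.1
  obtain ⟨K, hK, hrep⟩ := hx.morphComp hσ hτ hu
  obtain ⟨K', hK', hrep'⟩ := hx'.morphComp hσ hτ hu'
  obtain ⟨rfl, rfl⟩ := h _ _ _ _ _ hrep hrep'
  obtain ⟨-, -, rfl⟩ := (isCenteredRep_iff hτ).1 hx
  obtain ⟨-, -, rfl⟩ := (isCenteredRep_iff hτ).1 hx'
  have hj := hu.2.1
  have hj' := hu'.2.1
  simp only [shiftBy, zero_add] at hj hj'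
  obtain ⟨hkk, rfl⟩ := hσ.eq_of_cumLen_add_eq hj hj' (hK.symm.trans hK')
  obtain rfl : k = k' := by exact_mod_cast hkk
  exact ⟨rfl, rfl⟩

lemma RecognizableIn.morphComp (hσ : NonErasing σ) (hτ : NonErasing τ) {Y : Set (ℤ → A)}
    {X : Set (ℤ → B)} (hX : ∀ y ∈ Y, ∀ d : ℤ, shiftBy d (seqImage hτ y) ∈ X)
    (hτY : RecognizableIn τ Y) (hσX : RecognizableIn σ X) :
    RecognizableIn (_root_.morphComp σ τ) Y := by
  intro u K K' y y' h h'
  obtain ⟨k, j, x, hx, hu, hK⟩ := h.exists_of_morphComp hσ hτ (hX y h.1)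
  obtain ⟨k', j', x', hx', hu', hK'⟩ := h'.exists_of_morphComp hσ hτ (hX y' h'.1)
  obtain ⟨rfl, rfl⟩ := hσX _ _ _ _ _ hu hu'
  obtain ⟨rfl, rfl⟩ := hτY _ _ _ _ _ hx hx'
  exact ⟨by omega, rfl⟩

end Recognizability

theorem stmt4_general {A B C : Type*} [Fintype A]
    [TopologicalSpace A] [DiscreteTopology A] [TopologicalSpace B] [DiscreteTopology B]
    (τ : A → List B) (σ : B → List C) (hτ : NonErasing τ) (hσ : NonErasing σ)
    (Y : Set (ℤ → A)) (hY : IsSubshift Y)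
    (X : Set (ℤ → B)) (hX : IsSmallestSubshiftContaining τ Y X) :
    RecognizableIn (morphComp σ τ) Y ↔ (RecognizableIn τ Y ∧ RecognizableIn σ X) := by
  have himage : ∀ y ∈ Y, ∀ d : ℤ, shiftBy d (seqImage hτ y) ∈ X := fun y hy d =>
    hX.1.2 d _ (hX.2.1 y hy _ (isSeqImage_seqImage hτ y))
  exact ⟨fun h => ⟨h.of_morphComp_left hσ hτ,
      h.of_morphComp_right hσ hτ (hX.subset_repSet hτ hY)⟩,
    fun h => h.1.morphComp hσ hτ himage h.2⟩

/-- recognizability of a composition of morphisms (Lemma 3.5 of BSTY). -/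
theorem stmt4 {A B C : Type*} [Fintype A] [Fintype B] [Fintype C]
    [TopologicalSpace A] [DiscreteTopology A] [TopologicalSpace B] [DiscreteTopology B]
    (τ : A → List B) (σ : B → List C) (hτ : NonErasing τ) (hσ : NonErasing σ)
    (Y : Set (ℤ → A)) (hY : IsSubshift Y)
    (X : Set (ℤ → B)) (hX : IsSmallestSubshiftContaining τ Y X) :
    RecognizableIn (morphComp σ τ) Y ↔ (RecognizableIn τ Y ∧ RecognizableIn σ X) :=
  stmt4_general τ σ hτ hσ Y hY X hX
end
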